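/- arXiv:1904.01712 — 2 statements merged into one kernel-verified Lean document; each statement's English description precedes it below -/
import Mathlib

section
/- Let 1 ≤ p < q < ∞, d ≥ 1, and 0 < ε < 1. With f(x) = |x|^{-d/q}·χ_{(0,1)}(|x|) and k(x) = [χ_{(0,ε)}(|x|) − χ_{(ε,1)}(|x|)]f(x), the pair satisfies (‖f+k‖² + ‖f−k‖²)/(2(‖f‖² + ‖k‖²)) ≥ 1 + (1 − ε^{d−dp/q})^{2/p}, where ‖·‖ denotes the small Morrey norm on ℝ^d. -/
/-!
By scaling, the Morrey quantity of the critical power `‖x‖ ^ (-d/q)` on a ball centred at `0` is a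
constant `C` independent of the radius, and since the weight `‖x‖ ^ (-dp/q)` is radially
decreasing, off-centre balls of the same radius give no more. As `|f|, |k| ≤ ‖x‖ ^ (-d/q)`, both
`‖f‖` and `‖k‖` are at most `C`. On the other hand `f + k = 2f` on the ball of radius `ε`, so
`‖f + k‖ ≥ 2C`, and `f - k = 2f` on the annulus `ε < |x| < 1`, which carries the fraction
`1 - ε^(d - dp/q)` of the weight of the unit ball; letting the radius increase to `1` gives
`‖f - k‖ ≥ 2C (1 - ε^(d - dp/q))^(1/p)`. The quotient is therefore at least
`(4C² + 4C² (1 - ε^(d - dp/q))^(2/p)) / 4C²`.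
-/

open MeasureTheory Metric ENNReal

/-- The small Morrey norm: sup over centers `a` and radii `R ∈ (0,1)` of
`|B(a,R)|^(1/q-1/p) (∫_{B(a,R)} |f|^p)^(1/p)`, valued in `ℝ≥0∞`. -/
noncomputable def smallMorreyNorm (d : ℕ) (p q : ℝ)
    (f : EuclideanSpace ℝ (Fin d) → ℝ) : ℝ≥0∞ :=
  ⨆ (a : EuclideanSpace ℝ (Fin d)) (R : ℝ) (_ : 0 < R) (_ : R < 1),
    volume (ball a R) ^ (1 / q - 1 / p) *
      (∫⁻ y in ball a R, ENNReal.ofReal (|f y| ^ p)) ^ (1 / p)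

/-- The (classical) Morrey norm: sup over all centers `a` and radii `R > 0`. -/
noncomputable def morreyNorm (d : ℕ) (p q : ℝ)
    (f : EuclideanSpace ℝ (Fin d) → ℝ) : ℝ≥0∞ :=
  ⨆ (a : EuclideanSpace ℝ (Fin d)) (R : ℝ) (_ : 0 < R),
    volume (ball a R) ^ (1 / q - 1 / p) *
      (∫⁻ y in ball a R, ENNReal.ofReal (|f y| ^ p)) ^ (1 / p)

open Set Filter Module Topology

theorem rpow_neg_div_rpow {r : ℝ} (hr : 0 ≤ r) (d p q : ℝ) :
    (r ^ (-d / q)) ^ p = r ^ (-(d * p / q)) := by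
  rw [← Real.rpow_mul hr]
  ring_nf

theorem ENNReal.one_add_sq_le_sq_add_sq_div {a b c x y t : ℝ≥0∞} (hc0 : c ≠ 0) (hc : c ≠ ⊤)
    (ha : a ≤ c) (hb : b ≤ c) (hx : 2 * c ≤ x) (hy : 2 * c * t ≤ y) :
    1 + t ^ 2 ≤ (x ^ 2 + y ^ 2) / (2 * (a ^ 2 + b ^ 2)) := by
  have h4c0 : 4 * c ^ 2 ≠ 0 := mul_ne_zero (by norm_num) (pow_ne_zero 2 hc0)
  have h4c : 4 * c ^ 2 ≠ ⊤ := ENNReal.mul_ne_top (by norm_num) (ENNReal.pow_ne_top hc)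
  calc 1 + t ^ 2 = ((2 * c) ^ 2 + (2 * c * t) ^ 2) / (4 * c ^ 2) := by
        rw [ENNReal.eq_div_iff h4c0 h4c]
        ring
    _ ≤ (x ^ 2 + y ^ 2) / (2 * (c ^ 2 + c ^ 2)) := by
        rw [show 2 * (c ^ 2 + c ^ 2) = 4 * c ^ 2 by ring]
        gcongr
    _ ≤ _ := by gcongr

theorem tendsto_measure_ball_of_monotone {X : Type*} [PseudoMetricSpace X] [MeasurableSpace X]
    (ν : Measure X) (x : X) {u : ℕ → ℝ} {R : ℝ} (hu : Monotone u)
    (hlim : Tendsto u atTop (𝓝 R)) :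
    Tendsto (fun n => ν (ball x (u n))) atTop (𝓝 (ν (ball x R))) := by
  have hunion : ⋃ n, ball x (u n) = ball x R := by
    ext y
    simp only [mem_iUnion, mem_ball]
    refine ⟨fun ⟨n, hn⟩ => hn.trans_le (hu.ge_of_tendsto hlim n), fun hy => ?_⟩
    exact (hlim.eventually (lt_mem_nhds hy)).exists
  rw [← hunion]
  exact tendsto_measure_iUnion_atTop fun m n hmn => ball_subset_ball (hu hmn)

section RadialIntegrals

variable {E : Type*} [NormedAddCommGroup E] [NormedSpace ℝ E] [MeasurableSpace E] [BorelSpace E]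
  [FiniteDimensional ℝ E] [Nontrivial E] (μ : Measure E) [μ.IsAddHaarMeasure]

theorem lintegral_fun_norm_addHaar {h : ℝ → ℝ≥0∞} (hh : Measurable h) :
    ∫⁻ x, h ‖x‖ ∂μ = finrank ℝ E * μ (ball 0 1) *
      ∫⁻ r in Ioi (0 : ℝ), ENNReal.ofReal (r ^ (finrank ℝ E - 1)) * h r := by
  have hh' : Measurable fun y : sphere (0 : E) 1 × Ioi (0 : ℝ) => h y.2 :=
    hh.comp (measurable_subtype_coe.comp measurable_snd)
  calc ∫⁻ x, h ‖x‖ ∂μ = ∫⁻ x : ({0}ᶜ : Set E), h ‖x.1‖ ∂μ.comap (↑) := by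
        rw [lintegral_subtype_comap (measurableSet_singleton 0).compl fun x => h ‖x‖,
          restrict_compl_singleton]
    _ = ∫⁻ y, h y.2 ∂μ.toSphere.prod (.volumeIoiPow (finrank ℝ E - 1)) := by
        rw [← μ.measurePreserving_homeomorphUnitSphereProd.lintegral_comp
          (f := fun y => h y.2.1) hh']
        simp only [homeomorphUnitSphereProd_apply_snd_coe]
    _ = μ.toSphere univ * ∫⁻ r, h r ∂.volumeIoiPow (finrank ℝ E - 1) := by
        rw [lintegral_prod _ hh'.aemeasurable]
        simp [lintegral_const, mul_comm]
    _ = _ := by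
        rw [Measure.toSphere_apply_univ, Measure.volumeIoiPow,
          lintegral_withDensity_eq_lintegral_mul _
            (measurable_subtype_coe.pow_const _).ennreal_ofReal (by fun_prop),
          ← lintegral_subtype_comap measurableSet_Ioi fun r => ENNReal.ofReal (r ^ _) * h r]
        rfl

theorem setLIntegral_ball_zero_norm_rpow_neg {β R : ℝ} (hβ : β < finrank ℝ E) (hR : 0 < R) :
    ∫⁻ x in ball (0 : E) R, ENNReal.ofReal (‖x‖ ^ (-β)) ∂μ =
      ENNReal.ofReal (R ^ (finrank ℝ E - β) / (finrank ℝ E - β)) * finrank ℝ E *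
        μ (ball 0 1) := by
  set n := finrank ℝ E with hn_def
  have hn : 1 ≤ n := finrank_pos
  have hmeas : Measurable ((Iio R).indicator fun r : ℝ => ENNReal.ofReal (r ^ (-β))) :=
    (Measurable.ennreal_ofReal (by fun_prop)).indicator measurableSet_Iio
  have hγ : -1 < (n : ℝ) - 1 - β := by linarith
  have hint : IntegrableOn (fun r : ℝ => r ^ ((n : ℝ) - 1 - β)) (Ioo 0 R) :=
    (intervalIntegral.intervalIntegrable_rpow' hγ).1.mono_set Ioo_subset_Ioc_self
  have hball : (ball (0 : E) R).indicator (fun x => ENNReal.ofReal (‖x‖ ^ (-β))) =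
      fun x => (Iio R).indicator (fun r => ENNReal.ofReal (r ^ (-β))) ‖x‖ := by
    ext x
    by_cases hx : ‖x‖ < R <;> simp [hx]
  have hradial : ∫⁻ r in Ioi 0, ENNReal.ofReal (r ^ (n - 1)) *
      (Iio R).indicator (fun r => ENNReal.ofReal (r ^ (-β))) r =
      ∫⁻ r in Ioo 0 R, ENNReal.ofReal (r ^ ((n : ℝ) - 1 - β)) := by
    simp_rw [← indicator_mul_right _ (fun r => ENNReal.ofReal (r ^ (n - 1)))]
    rw [lintegral_indicator measurableSet_Iio, Measure.restrict_restrict measurableSet_Iio,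
      Iio_inter_Ioi]
    refine setLIntegral_congr_fun measurableSet_Ioo fun r hr => ?_
    rw [← ENNReal.ofReal_mul (pow_nonneg hr.1.le _), ← Real.rpow_natCast,
      ← Real.rpow_add hr.1, Nat.cast_sub hn, Nat.cast_one, sub_eq_add_neg _ β]
  rw [← lintegral_indicator measurableSet_ball, hball, lintegral_fun_norm_addHaar μ hmeas,
    hradial, ← ofReal_integral_eq_lintegral_ofReal hint
      ((ae_restrict_mem measurableSet_Ioo).mono fun r hr => Real.rpow_nonneg hr.1.le _),
    ← integral_Ioc_eq_integral_Ioo, ← intervalIntegral.integral_of_le hR.le,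
    integral_rpow (Or.inl hγ), ← hn_def, show (n : ℝ) - 1 - β + 1 = n - β by ring,
    Real.zero_rpow (by linarith), sub_zero]
  ring

theorem setLIntegral_ball_zero_norm_rpow_neg_eq_mul {β R : ℝ} (hβ : β < finrank ℝ E)
    (hR : 0 < R) :
    ∫⁻ x in ball (0 : E) R, ENNReal.ofReal (‖x‖ ^ (-β)) ∂μ =
      ENNReal.ofReal (R ^ (finrank ℝ E - β)) *
        ∫⁻ x in ball (0 : E) 1, ENNReal.ofReal (‖x‖ ^ (-β)) ∂μ := by
  rw [setLIntegral_ball_zero_norm_rpow_neg μ hβ hR,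
    setLIntegral_ball_zero_norm_rpow_neg μ hβ one_pos, Real.one_rpow, div_eq_mul_one_div,
    ENNReal.ofReal_mul (Real.rpow_nonneg hR.le _)]
  ring

theorem setLIntegral_ball_zero_norm_rpow_neg_ne_zero {β : ℝ} (hβ : β < finrank ℝ E) :
    ∫⁻ x in ball (0 : E) 1, ENNReal.ofReal (‖x‖ ^ (-β)) ∂μ ≠ 0 := by
  rw [setLIntegral_ball_zero_norm_rpow_neg μ hβ one_pos]
  have : 0 < (finrank ℝ E : ℝ) - β := sub_pos.2 hβ
  simpa [this, finrank_pos.ne'] using (measure_ball_pos μ (0 : E) one_pos).ne'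

theorem setLIntegral_ball_zero_norm_rpow_neg_ne_top {β : ℝ} (hβ : β < finrank ℝ E) :
    ∫⁻ x in ball (0 : E) 1, ENNReal.ofReal (‖x‖ ^ (-β)) ∂μ ≠ ⊤ := by
  rw [setLIntegral_ball_zero_norm_rpow_neg μ hβ one_pos]
  exact ENNReal.mul_ne_top (ENNReal.mul_ne_top ofReal_ne_top (natCast_ne_top _))
    measure_ball_lt_top.ne

theorem ofReal_sub_mul_le_setLIntegral_ball_sdiff_closedBall {β r R : ℝ}
    (hβ : β < finrank ℝ E) (hr : 0 < r) (hR : 0 < R) :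
    ENNReal.ofReal (R ^ (finrank ℝ E - β) - r ^ (finrank ℝ E - β)) *
        ∫⁻ x in ball (0 : E) 1, ENNReal.ofReal (‖x‖ ^ (-β)) ∂μ ≤
      ∫⁻ x in ball (0 : E) R \ closedBall 0 r, ENNReal.ofReal (‖x‖ ^ (-β)) ∂μ := by
  set F : E → ℝ≥0∞ := fun x => ENNReal.ofReal (‖x‖ ^ (-β))
  have hcover : ∫⁻ x in ball (0 : E) R, F x ∂μ ≤
      ∫⁻ x in ball (0 : E) R \ closedBall 0 r, F x ∂μ + ∫⁻ x in ball (0 : E) r, F x ∂μ :=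
    calc ∫⁻ x in ball (0 : E) R, F x ∂μ
        ≤ ∫⁻ x in (ball 0 R \ closedBall 0 r) ∪ (ball 0 r ∪ sphere 0 r), F x ∂μ := by
          rw [ball_union_sphere, sdiff_union_self]
          exact lintegral_mono_set subset_union_left
      _ ≤ ∫⁻ x in ball (0 : E) R \ closedBall 0 r, F x ∂μ +
            (∫⁻ x in ball (0 : E) r, F x ∂μ + ∫⁻ x in sphere (0 : E) r, F x ∂μ) :=
          (lintegral_union_le _ _ _).trans (add_le_add le_rfl (lintegral_union_le _ _ _))
      _ = _ := by rw [setLIntegral_measure_zero _ _ (μ.addHaar_sphere 0 r), add_zero]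
  rw [setLIntegral_ball_zero_norm_rpow_neg_eq_mul μ hβ hR,
    setLIntegral_ball_zero_norm_rpow_neg_eq_mul μ hβ hr] at hcover
  rw [ENNReal.ofReal_sub _ (Real.rpow_nonneg hr.le _),
    ENNReal.sub_mul fun _ _ => setLIntegral_ball_zero_norm_rpow_neg_ne_top μ hβ]
  exact tsub_le_iff_right.2 hcover

theorem setLIntegral_ball_le_setLIntegral_ball_zero {φ : ℝ → ℝ≥0∞} (hφ : AntitoneOn φ (Ioi 0))
    (a : E) {R : ℝ} (hR : 0 < R) :
    ∫⁻ x in ball a R, φ ‖x‖ ∂μ ≤ ∫⁻ x in ball 0 R, φ ‖x‖ ∂μ := by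
  set A := ball a R
  set B := ball (0 : E) R
  -- `A \ B` and `B \ A` have equal measure, and `φ ‖·‖` is `≤ φ R` on the first, `≥ φ R` on the
  -- second (off the null set `{0}`).
  have hAB : μ (A \ B) = μ (B \ A) :=
    measure_sdiff_symm measurableSet_ball.nullMeasurableSet measurableSet_ball.nullMeasurableSet
      (μ.addHaar_ball_center a R)
      (ne_top_of_le_ne_top measure_ball_lt_top.ne (measure_mono inter_subset_left))
  have hout : ∫⁻ x in A \ B, φ ‖x‖ ∂μ ≤ φ R * μ (A \ B) := by
    rw [← setLIntegral_const]
    refine setLIntegral_mono' (measurableSet_ball.diff measurableSet_ball) fun x hx => ?_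
    have hRx : R ≤ ‖x‖ := not_lt.1 fun h => hx.2 (mem_ball_zero_iff.2 h)
    exact hφ hR (hR.trans_le hRx) hRx
  have hin : φ R * μ (B \ A) ≤ ∫⁻ x in B \ A, φ ‖x‖ ∂μ := by
    rw [← setLIntegral_const]
    refine setLIntegral_mono_ae' (measurableSet_ball.diff measurableSet_ball) ?_
    filter_upwards [μ.ae_ne 0] with x hx0 hx
    exact hφ (norm_pos_iff.2 hx0) hR (mem_ball_zero_iff.1 hx.1).le
  calc ∫⁻ x in A, φ ‖x‖ ∂μ = ∫⁻ x in A ∩ B, φ ‖x‖ ∂μ + ∫⁻ x in A \ B, φ ‖x‖ ∂μ :=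
        (lintegral_inter_add_sdiff _ A measurableSet_ball).symm
    _ ≤ ∫⁻ x in B ∩ A, φ ‖x‖ ∂μ + ∫⁻ x in B \ A, φ ‖x‖ ∂μ := by
        rw [inter_comm]
        exact add_le_add le_rfl (hout.trans (hAB ▸ hin))
    _ = ∫⁻ x in B, φ ‖x‖ ∂μ := lintegral_inter_add_sdiff _ B measurableSet_ball

end RadialIntegrals

section Morrey

variable {d : ℕ} {p q : ℝ}

noncomputable def morreyBallTerm (d : ℕ) (p q : ℝ) (f : EuclideanSpace ℝ (Fin d) → ℝ)
    (a : EuclideanSpace ℝ (Fin d)) (R : ℝ) : ℝ≥0∞ :=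
  volume (ball a R) ^ (1 / q - 1 / p) * (∫⁻ y in ball a R, ENNReal.ofReal (|f y| ^ p)) ^ (1 / p)

theorem morreyBallTerm_le_smallMorreyNorm (f : EuclideanSpace ℝ (Fin d) → ℝ)
    (a : EuclideanSpace ℝ (Fin d)) {R : ℝ} (hR0 : 0 < R) (hR1 : R < 1) :
    morreyBallTerm d p q f a R ≤ smallMorreyNorm d p q f :=
  le_iSup_of_le a <| le_iSup_of_le R <| le_iSup_of_le hR0 <| le_iSup_of_le hR1 le_rfl

theorem smallMorreyNorm_le {f : EuclideanSpace ℝ (Fin d) → ℝ} {C : ℝ≥0∞}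
    (h : ∀ a R, 0 < R → R < 1 → morreyBallTerm d p q f a R ≤ C) :
    smallMorreyNorm d p q f ≤ C :=
  iSup₂_le fun a R => iSup₂_le fun hR0 hR1 => h a R hR0 hR1

theorem morreyBallTerm_le_smallMorreyNorm_of_le_one (f : EuclideanSpace ℝ (Fin d) → ℝ)
    (a : EuclideanSpace ℝ (Fin d)) {R : ℝ} (hR0 : 0 < R) (hR1 : R ≤ 1) :
    morreyBallTerm d p q f a R ≤ smallMorreyNorm d p q f := by
  obtain ⟨u, hu, hu_mem, hlim⟩ := exists_seq_strictMono_tendsto' hR0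
  have hvol0 : volume (ball a R) ≠ 0 := (measure_ball_pos volume a hR0).ne'
  have hvolTop : volume (ball a R) ≠ ⊤ := measure_ball_lt_top.ne
  have hvol := ((ENNReal.continuous_rpow_const (y := 1 / q - 1 / p)).tendsto _).comp
    (tendsto_measure_ball_of_monotone volume a hu.monotone hlim)
  have hint := ((ENNReal.continuous_rpow_const (y := 1 / p)).tendsto _).comp
    (tendsto_measure_ball_of_monotone (volume.withDensity fun y => ENNReal.ofReal (|f y| ^ p)) a
      hu.monotone hlim)
  simp only [Function.comp_def, withDensity_apply _ measurableSet_ball] at hvol hint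
  refine le_of_tendsto' (ENNReal.Tendsto.mul hvol ?_ hint ?_) fun n =>
    morreyBallTerm_le_smallMorreyNorm f a (hu_mem n).1 ((hu_mem n).2.trans_le hR1)
  · exact Or.inl (ENNReal.rpow_pos (pos_iff_ne_zero.2 hvol0) hvolTop).ne'
  · exact Or.inr (ENNReal.rpow_ne_top_of_ne_zero hvol0 hvolTop)

/-- By scaling, this is the Morrey quantity of `‖x‖ ^ (-d / q)` on every ball centred at `0`. -/
noncomputable def criticalMorreyConst (d : ℕ) (p q : ℝ) : ℝ≥0∞ :=
  volume (ball (0 : EuclideanSpace ℝ (Fin d)) 1) ^ (1 / q - 1 / p) *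
    (∫⁻ x in ball (0 : EuclideanSpace ℝ (Fin d)) 1, ENNReal.ofReal (‖x‖ ^ (-(d * p / q)))) ^
      (1 / p)

theorem ofReal_mul_le_morreyBallTerm (hp : 0 < p) {c : ℝ} (hc : 0 ≤ c)
    {g : EuclideanSpace ℝ (Fin d) → ℝ} {a : EuclideanSpace ℝ (Fin d)} {R : ℝ}
    {S : Set (EuclideanSpace ℝ (Fin d))} (hS : MeasurableSet S) (hSR : S ⊆ ball a R)
    (hg : ∀ x ∈ S, c * ‖x‖ ^ (-(d : ℝ) / q) ≤ |g x|) :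
    ENNReal.ofReal c * (volume (ball a R) ^ (1 / q - 1 / p) *
      (∫⁻ x in S, ENNReal.ofReal (‖x‖ ^ (-(d * p / q)))) ^ (1 / p)) ≤
        morreyBallTerm d p q g a R := by
  have hcp : ENNReal.ofReal (c ^ p) ^ (1 / p) = ENNReal.ofReal c := by
    rw [ENNReal.ofReal_rpow_of_nonneg (by positivity) (by positivity), one_div,
      Real.rpow_rpow_inv hc hp.ne']
  have hint : ENNReal.ofReal (c ^ p) * ∫⁻ x in S, ENNReal.ofReal (‖x‖ ^ (-(d * p / q))) ≤
      ∫⁻ y in ball a R, ENNReal.ofReal (|g y| ^ p) := by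
    rw [← lintegral_const_mul' _ _ ofReal_ne_top]
    refine (setLIntegral_mono' hS fun x hx => ?_).trans (lintegral_mono_set hSR)
    rw [← ENNReal.ofReal_mul (by positivity), ← rpow_neg_div_rpow (norm_nonneg x),
      ← Real.mul_rpow hc (by positivity)]
    exact ENNReal.ofReal_le_ofReal (Real.rpow_le_rpow (by positivity) (hg x hx) hp.le)
  calc _ = volume (ball a R) ^ (1 / q - 1 / p) *
        (ENNReal.ofReal (c ^ p) * ∫⁻ x in S, ENNReal.ofReal (‖x‖ ^ (-(d * p / q)))) ^
          (1 / p) := by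
        rw [ENNReal.mul_rpow_of_nonneg _ _ (by positivity), hcp]
        ring
    _ ≤ _ := by
        rw [morreyBallTerm]
        gcongr

variable [NeZero d]

theorem critical_exponent_lt_finrank (hp : 0 < p) (hpq : p < q) :
    (d : ℝ) * p / q < finrank ℝ (EuclideanSpace ℝ (Fin d)) := by
  rw [finrank_euclideanSpace_fin, div_lt_iff₀ (hp.trans hpq)]
  exact mul_lt_mul_of_pos_left hpq (Nat.cast_pos.2 (NeZero.pos d))

theorem sub_critical_exponent_pos (hp : 0 < p) (hpq : p < q) : 0 < (d : ℝ) - d * p / q := by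
  simpa using critical_exponent_lt_finrank (d := d) hp hpq

theorem volume_ball_rpow_mul_setLIntegral_rpow (hp : 0 < p) (hpq : p < q)
    (a : EuclideanSpace ℝ (Fin d)) {R : ℝ} (hR : 0 < R) :
    volume (ball a R) ^ (1 / q - 1 / p) *
        (∫⁻ x in ball (0 : EuclideanSpace ℝ (Fin d)) R, ENNReal.ofReal (‖x‖ ^ (-(d * p / q)))) ^
          (1 / p) = criticalMorreyConst d p q := by
  have hscale : (R ^ d) ^ (1 / q - 1 / p) * (R ^ ((d : ℝ) - d * p / q)) ^ (1 / p) = 1 := by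
    rw [← Real.rpow_natCast, ← Real.rpow_mul hR.le, ← Real.rpow_mul hR.le, ← Real.rpow_add hR]
    convert Real.rpow_zero R using 2
    field_simp [hp.ne', (hp.trans hpq).ne']
    ring
  rw [Measure.addHaar_ball_of_pos volume a hR, setLIntegral_ball_zero_norm_rpow_neg_eq_mul volume
      (critical_exponent_lt_finrank hp hpq) hR,
    finrank_euclideanSpace_fin, ENNReal.mul_rpow_of_ne_top ofReal_ne_top measure_ball_lt_top.ne,
    ENNReal.mul_rpow_of_nonneg _ _ (by positivity : (0 : ℝ) ≤ 1 / p),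
    ENNReal.ofReal_rpow_of_pos (pow_pos hR d),
    ENNReal.ofReal_rpow_of_pos (Real.rpow_pos_of_pos hR _)]
  calc _ = ENNReal.ofReal ((R ^ d) ^ (1 / q - 1 / p) * (R ^ ((d : ℝ) - d * p / q)) ^ (1 / p)) *
        criticalMorreyConst d p q := by
        rw [ENNReal.ofReal_mul (Real.rpow_nonneg (pow_nonneg hR.le d) _), criticalMorreyConst]
        ring
    _ = _ := by rw [hscale, ENNReal.ofReal_one, one_mul]

theorem criticalMorreyConst_ne_zero (hp : 0 < p) (hpq : p < q) :
    criticalMorreyConst d p q ≠ 0 := by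
  have hβ := critical_exponent_lt_finrank (d := d) hp hpq
  have hω := (measure_ball_pos volume (0 : EuclideanSpace ℝ (Fin d)) one_pos).ne'
  refine mul_ne_zero (ENNReal.rpow_pos (pos_iff_ne_zero.2 hω) measure_ball_lt_top.ne).ne' ?_
  exact (ENNReal.rpow_pos (pos_iff_ne_zero.2 (setLIntegral_ball_zero_norm_rpow_neg_ne_zero _ hβ))
    (setLIntegral_ball_zero_norm_rpow_neg_ne_top _ hβ)).ne'

theorem criticalMorreyConst_ne_top (hp : 0 < p) (hpq : p < q) :
    criticalMorreyConst d p q ≠ ⊤ := by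
  have hβ := critical_exponent_lt_finrank (d := d) hp hpq
  have hω := (measure_ball_pos volume (0 : EuclideanSpace ℝ (Fin d)) one_pos).ne'
  exact ENNReal.mul_ne_top (ENNReal.rpow_ne_top_of_ne_zero hω measure_ball_lt_top.ne)
    (ENNReal.rpow_ne_top_of_nonneg (by positivity)
      (setLIntegral_ball_zero_norm_rpow_neg_ne_top _ hβ))

theorem smallMorreyNorm_le_criticalMorreyConst (hp : 0 < p) (hpq : p < q)
    {g : EuclideanSpace ℝ (Fin d) → ℝ} (hg : ∀ x, |g x| ≤ ‖x‖ ^ (-(d : ℝ) / q)) :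
    smallMorreyNorm d p q g ≤ criticalMorreyConst d p q := by
  refine smallMorreyNorm_le fun a R hR0 _ => ?_
  rw [← volume_ball_rpow_mul_setLIntegral_rpow hp hpq a hR0, morreyBallTerm]
  have hβ : 0 ≤ (d : ℝ) * p / q := by have := hp.trans hpq; positivity
  have hdecr : AntitoneOn (fun r : ℝ => ENNReal.ofReal (r ^ (-(d * p / q)))) (Ioi 0) :=
    fun s hs t _ hst => ENNReal.ofReal_le_ofReal (Real.rpow_le_rpow_of_nonpos hs hst (by linarith))
  gcongr _ * ?_ ^ _
  calc ∫⁻ y in ball a R, ENNReal.ofReal (|g y| ^ p)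
      ≤ ∫⁻ y in ball a R, ENNReal.ofReal (‖y‖ ^ (-(d * p / q))) := by
        refine lintegral_mono fun y => ENNReal.ofReal_le_ofReal ?_
        rw [← rpow_neg_div_rpow (norm_nonneg y)]
        exact Real.rpow_le_rpow (abs_nonneg _) (hg y) hp.le
    _ ≤ _ := setLIntegral_ball_le_setLIntegral_ball_zero volume hdecr a hR0

theorem ofReal_mul_criticalMorreyConst_le_of_ball (hp : 0 < p) (hpq : p < q) {c : ℝ}
    (hc : 0 ≤ c) {R : ℝ} (hR0 : 0 < R) (hR1 : R ≤ 1) {g : EuclideanSpace ℝ (Fin d) → ℝ}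
    (hg : ∀ x, 0 < ‖x‖ → ‖x‖ < R → c * ‖x‖ ^ (-(d : ℝ) / q) ≤ |g x|) :
    ENNReal.ofReal c * criticalMorreyConst d p q ≤ smallMorreyNorm d p q g := by
  rw [← volume_ball_rpow_mul_setLIntegral_rpow hp hpq 0 hR0,
    ← setLIntegral_congr (sdiff_null_ae_eq_self (measure_singleton 0))]
  refine (ofReal_mul_le_morreyBallTerm hp hc (measurableSet_ball.diff (measurableSet_singleton 0))
    sdiff_subset fun x hx => hg x (norm_pos_iff.2 hx.2) (mem_ball_zero_iff.1 hx.1)).trans ?_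
  exact morreyBallTerm_le_smallMorreyNorm_of_le_one g 0 hR0 hR1

theorem ofReal_mul_criticalMorreyConst_le_of_annulus (hp : 0 < p) (hpq : p < q) {c : ℝ}
    (hc : 0 ≤ c) {ε : ℝ} (hε0 : 0 < ε) (hε1 : ε ≤ 1) {g : EuclideanSpace ℝ (Fin d) → ℝ}
    (hg : ∀ x, ε < ‖x‖ → ‖x‖ < 1 → c * ‖x‖ ^ (-(d : ℝ) / q) ≤ |g x|) :
    ENNReal.ofReal c * criticalMorreyConst d p q *
      ENNReal.ofReal ((1 - ε ^ ((d : ℝ) - d * p / q)) ^ (1 / p)) ≤ smallMorreyNorm d p q g := by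
  have hannulus := ofReal_sub_mul_le_setLIntegral_ball_sdiff_closedBall volume
    (critical_exponent_lt_finrank (d := d) hp hpq) hε0 one_pos
  rw [finrank_euclideanSpace_fin, Real.one_rpow] at hannulus
  have hA : 0 ≤ 1 - ε ^ ((d : ℝ) - d * p / q) :=
    sub_nonneg.2 (Real.rpow_le_one hε0.le hε1 (sub_critical_exponent_pos hp hpq).le)
  have hS : ball (0 : EuclideanSpace ℝ (Fin d)) 1 \ closedBall 0 ε ⊆ ball 0 1 := sdiff_subset
  have hlower := ofReal_mul_le_morreyBallTerm hp hc
    (measurableSet_ball.diff measurableSet_closedBall) hS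
    fun x hx => hg x (by simpa using hx.2) (mem_ball_zero_iff.1 hx.1)
  refine le_trans ?_ (hlower.trans (morreyBallTerm_le_smallMorreyNorm_of_le_one g 0 one_pos le_rfl))
  rw [mul_right_comm, mul_assoc, criticalMorreyConst,
    ← ENNReal.ofReal_rpow_of_nonneg hA (by positivity), mul_left_comm (_ ^ (1 / p)),
    ← ENNReal.mul_rpow_of_nonneg _ _ (by positivity)]
  gcongr _ * (_ * ?_ ^ _)

end Morrey

section TestFunctions

variable {d : ℕ} {q ε : ℝ}

/-- The function `f` of the theorem. -/
noncomputable def truncatedPower (d : ℕ) (q : ℝ) (x : EuclideanSpace ℝ (Fin d)) : ℝ :=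
  if 0 < ‖x‖ ∧ ‖x‖ < 1 then ‖x‖ ^ (-(d : ℝ) / q) else 0

/-- The function `k` of the theorem. -/
noncomputable def flippedTruncatedPower (d : ℕ) (q ε : ℝ) (x : EuclideanSpace ℝ (Fin d)) : ℝ :=
  ((if 0 < ‖x‖ ∧ ‖x‖ < ε then (1 : ℝ) else 0) - (if ε < ‖x‖ ∧ ‖x‖ < 1 then (1 : ℝ) else 0)) *
    truncatedPower d q x

theorem abs_truncatedPower_le (x : EuclideanSpace ℝ (Fin d)) :
    |truncatedPower d q x| ≤ ‖x‖ ^ (-(d : ℝ) / q) := by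
  unfold truncatedPower
  split_ifs <;> simp [abs_of_nonneg, Real.rpow_nonneg]

theorem abs_flippedTruncatedPower_le (x : EuclideanSpace ℝ (Fin d)) :
    |flippedTruncatedPower d q ε x| ≤ ‖x‖ ^ (-(d : ℝ) / q) := by
  refine le_trans ?_ (abs_truncatedPower_le x)
  unfold flippedTruncatedPower
  split_ifs <;> simp

theorem truncatedPower_add_flippedTruncatedPower {x : EuclideanSpace ℝ (Fin d)} (h0 : 0 < ‖x‖)
    (hε : ‖x‖ < ε) (hε1 : ε < 1) :
    (truncatedPower d q + flippedTruncatedPower d q ε) x = 2 * ‖x‖ ^ (-(d : ℝ) / q) := by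
  simp [flippedTruncatedPower, truncatedPower, h0, hε, hε.trans hε1, not_lt.2 hε.le]
  ring

theorem truncatedPower_sub_flippedTruncatedPower {x : EuclideanSpace ℝ (Fin d)}
    (hε0 : 0 < ε) (hε : ε < ‖x‖) (h1 : ‖x‖ < 1) :
    (truncatedPower d q - flippedTruncatedPower d q ε) x = 2 * ‖x‖ ^ (-(d : ℝ) / q) := by
  simp [flippedTruncatedPower, truncatedPower, hε, h1, hε0.trans hε, not_lt.2 hε.le]
  ring

end TestFunctions

/-- with `f(x) = |x|^{-d/q} χ_{(0,1)}(|x|)` and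
`k = (χ_{(0,ε)}(|·|) - χ_{(ε,1)}(|·|)) f`, the von Neumann–Jordan quotient of the pair
`(f,k)` is at least `1 + (1 - ε^{d-dp/q})^{2/p}`. -/
theorem vonNeumannJordan_quotient_lower (d : ℕ) (p q : ℝ) (hp : 1 ≤ p) (hpq : p < q)
    (hd : 1 ≤ d) (ε : ℝ) (hε0 : 0 < ε) (hε1 : ε < 1) :
    letI f : EuclideanSpace ℝ (Fin d) → ℝ :=
      fun x => if 0 < ‖x‖ ∧ ‖x‖ < 1 then ‖x‖ ^ (-(d : ℝ) / q) else 0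
    letI k : EuclideanSpace ℝ (Fin d) → ℝ :=
      fun x => ((if 0 < ‖x‖ ∧ ‖x‖ < ε then (1 : ℝ) else 0) -
        (if ε < ‖x‖ ∧ ‖x‖ < 1 then (1 : ℝ) else 0)) * f x
    1 + ENNReal.ofReal ((1 - ε ^ ((d : ℝ) - d * p / q)) ^ (2 / p)) ≤
      (smallMorreyNorm d p q (f + k) ^ 2 + smallMorreyNorm d p q (f - k) ^ 2) /
        (2 * (smallMorreyNorm d p q f ^ 2 + smallMorreyNorm d p q k ^ 2)) := by
  have : NeZero d := ⟨by omega⟩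
  have hp0 : 0 < p := by linarith
  have hplus := ofReal_mul_criticalMorreyConst_le_of_ball hp0 hpq zero_le_two hε0 hε1.le
    (g := truncatedPower d q + flippedTruncatedPower d q ε)
    fun x h0 hx => by rw [truncatedPower_add_flippedTruncatedPower h0 hx hε1]; exact le_abs_self _
  have hminus := ofReal_mul_criticalMorreyConst_le_of_annulus hp0 hpq zero_le_two hε0 hε1.le
    (g := truncatedPower d q - flippedTruncatedPower d q ε)
    fun x hx h1 => by rw [truncatedPower_sub_flippedTruncatedPower hε0 hx h1]; exact le_abs_self _
  have hsq : ENNReal.ofReal ((1 - ε ^ ((d : ℝ) - d * p / q)) ^ (2 / p)) =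
      ENNReal.ofReal ((1 - ε ^ ((d : ℝ) - d * p / q)) ^ (1 / p)) ^ 2 := by
    have h1 : 0 ≤ 1 - ε ^ ((d : ℝ) - d * p / q) :=
      sub_nonneg.2 (Real.rpow_le_one hε0.le hε1.le (sub_critical_exponent_pos hp0 hpq).le)
    rw [← ENNReal.ofReal_pow (Real.rpow_nonneg h1 _), ← Real.rpow_natCast, ← Real.rpow_mul h1]
    norm_num [div_eq_mul_inv, mul_comm]
  rw [ENNReal.ofReal_ofNat] at hplus hminus
  rw [hsq]
  exact ENNReal.one_add_sq_le_sq_add_sq_div (criticalMorreyConst_ne_zero hp0 hpq)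
    (criticalMorreyConst_ne_top hp0 hpq)
    (smallMorreyNorm_le_criticalMorreyConst hp0 hpq abs_truncatedPower_le)
    (smallMorreyNorm_le_criticalMorreyConst hp0 hpq abs_flippedTruncatedPower_le) hplus hminus
end

section
/- Let 1 ≤ p < q < ∞, d ≥ 1, and 0 < ε < 1. Define on ℝ^d: f(x) = |x|^{-d/q}, w(x) = χ_{(1/ε, ∞)}(|x|)·f(x). Then the Morrey norms satisfy ‖w‖_{M^p_q} = ‖f‖_{M^p_q}. -/
/-!
Write `f = ‖x‖ ^ (-d/q)`. Since `|f| ^ p` is radially decreasing, its integral over a ball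
`B(a, R)` is at most its integral over `B(0, R)`, a ball of the same measure; and since `f` is
homogeneous of degree `-d/q`, the Morrey quantity of `f` on `B(0, R)` does not depend on `R`.
Hence `‖f‖_{M^p_q}` is the Morrey quantity of `f` on the unit ball. The difference `f - w` is
supported in `B(0, 1/ε)` and lies in `L^p` because `dp/q < d`, so by Minkowski's inequality its
contribution on `B(0, R)` is at most `|B(0, R)| ^ (1/q - 1/p) ‖f - w‖_p`, which tends to `0` as
`R → ∞`. Letting `R → ∞` gives `‖f‖_{M^p_q} ≤ ‖w‖_{M^p_q}`, and `|w| ≤ |f|` gives the converse.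
-/

open MeasureTheory Metric ENNReal

open Filter Topology Module
open scoped Pointwise

theorem setLIntegral_le_setLIntegral_of_measure_eq {α : Type*} [MeasurableSpace α]
    {μ : Measure α} {s t : Set α} {g : α → ℝ≥0∞} {c : ℝ≥0∞} (hs : MeasurableSet s)
    (ht : MeasurableSet t) (hst : μ s = μ t) (hfin : μ (s ∩ t) ≠ ∞)
    (hout : ∀ᵐ x ∂μ, x ∈ s \ t → g x ≤ c) (hin : ∀ᵐ x ∂μ, x ∈ t \ s → c ≤ g x) :
    ∫⁻ x in s, g x ∂μ ≤ ∫⁻ x in t, g x ∂μ := by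
  calc ∫⁻ x in s, g x ∂μ = ∫⁻ x in s ∩ t, g x ∂μ + ∫⁻ x in s \ t, g x ∂μ :=
        (lintegral_inter_add_sdiff g s ht).symm
    _ ≤ ∫⁻ x in t ∩ s, g x ∂μ + ∫⁻ _ in t \ s, c ∂μ := by
        rw [Set.inter_comm, setLIntegral_const, ← measure_sdiff_symm hs.nullMeasurableSet
          ht.nullMeasurableSet hst hfin, ← setLIntegral_const]
        gcongr 1
        exact setLIntegral_mono_ae' (hs.diff ht) hout
    _ ≤ ∫⁻ x in t ∩ s, g x ∂μ + ∫⁻ x in t \ s, g x ∂μ := by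
        gcongr 1
        exact setLIntegral_mono_ae' (ht.diff hs) hin
    _ = ∫⁻ x in t, g x ∂μ := lintegral_inter_add_sdiff g t hs

section AddHaar

variable {E : Type*} [NormedAddCommGroup E] [NormedSpace ℝ E] [FiniteDimensional ℝ E]
  [MeasurableSpace E] [BorelSpace E] (μ : Measure E) [μ.IsAddHaarMeasure]

theorem setLIntegral_comp_smul (g : E → ℝ≥0∞) (s : Set E) {r : ℝ} (hr : r ≠ 0) :
    ∫⁻ x in s, g (r • x) ∂μ =
      ENNReal.ofReal |(r ^ finrank ℝ E)⁻¹| * ∫⁻ x in r • s, g x ∂μ := by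
  let e := MeasurableEquiv.smul₀ (α := E) r hr
  rw [← smul_eq_mul, ← lintegral_smul_measure, ← Measure.restrict_smul,
    ← Measure.map_addHaar_smul μ hr]
  change _ = ∫⁻ x, g x ∂(Measure.map e μ).restrict (e '' s)
  rw [e.restrict_map, e.preimage_image, lintegral_map_equiv]
  rfl

theorem setLIntegral_ball_zero_rpow_neg (α : ℝ) {R : ℝ} (hR : 0 < R) :
    ∫⁻ y in ball (0 : E) R, ENNReal.ofReal (‖y‖ ^ (-α)) ∂μ =
      ENNReal.ofReal (R ^ (finrank ℝ E - α)) *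
        ∫⁻ y in ball (0 : E) 1, ENNReal.ofReal (‖y‖ ^ (-α)) ∂μ := by
  have hdil := setLIntegral_comp_smul μ (fun y => ENNReal.ofReal (‖y‖ ^ (-α))) (ball 0 1) hR.ne'
  have hhom : ∀ y : E, ENNReal.ofReal (‖R • y‖ ^ (-α)) =
      ENNReal.ofReal (R ^ (-α)) * ENNReal.ofReal (‖y‖ ^ (-α)) := fun y => by
    rw [norm_smul, Real.norm_of_nonneg hR.le, Real.mul_rpow hR.le (norm_nonneg y),
      ENNReal.ofReal_mul (by positivity)]
  simp only [hhom, smul_unitBall_of_pos hR] at hdil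
  rw [lintegral_const_mul' _ _ ENNReal.ofReal_ne_top] at hdil
  have hRd : 0 < R ^ finrank ℝ E := by positivity
  calc ∫⁻ y in ball (0 : E) R, ENNReal.ofReal (‖y‖ ^ (-α)) ∂μ
      = ENNReal.ofReal (R ^ finrank ℝ E) * (ENNReal.ofReal |(R ^ finrank ℝ E)⁻¹| *
          ∫⁻ y in ball (0 : E) R, ENNReal.ofReal (‖y‖ ^ (-α)) ∂μ) := by
        rw [← mul_assoc, ← ENNReal.ofReal_mul hRd.le, abs_of_pos (inv_pos.2 hRd),
          mul_inv_cancel₀ hRd.ne', ENNReal.ofReal_one, one_mul]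
    _ = _ := by
        rw [← hdil, ← mul_assoc, ← ENNReal.ofReal_mul hRd.le, ← Real.rpow_natCast,
          ← Real.rpow_add hR, ← sub_eq_add_neg]

theorem setLIntegral_ball_rpow_neg_le_ball_zero [Nontrivial E] {α : ℝ} (hα : 0 ≤ α) (a : E)
    {R : ℝ} (hR : 0 < R) :
    ∫⁻ y in ball a R, ENNReal.ofReal (‖y‖ ^ (-α)) ∂μ ≤
      ∫⁻ y in ball 0 R, ENNReal.ofReal (‖y‖ ^ (-α)) ∂μ := by
  refine setLIntegral_le_setLIntegral_of_measure_eq (c := ENNReal.ofReal (R ^ (-α)))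
    measurableSet_ball measurableSet_ball (μ.addHaar_ball_center a R)
    (measure_ne_top_of_subset Set.inter_subset_left measure_ball_lt_top.ne) ?_ ?_
  · refine Eventually.of_forall fun y ⟨_, hy⟩ => ENNReal.ofReal_le_ofReal ?_
    rw [mem_ball_zero_iff, not_lt] at hy
    exact Real.rpow_le_rpow_of_nonpos hR hy (neg_nonpos.2 hα)
  · filter_upwards [μ.ae_ne 0] with y hy0 ⟨hy, _⟩
    rw [mem_ball_zero_iff] at hy
    exact ENNReal.ofReal_le_ofReal
      (Real.rpow_le_rpow_of_nonpos (norm_pos_iff.2 hy0) hy.le (neg_nonpos.2 hα))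

theorem setLIntegral_rpow_neg_norm_lt_top (hd : 1 ≤ finrank ℝ E) {α : ℝ}
    (hα : α < finrank ℝ E) {s : Set E} (hs : Bornology.IsBounded s) :
    ∫⁻ y in s, ENNReal.ofReal (‖y‖ ^ (-α)) ∂μ < ∞ := by
  have hloc : LocallyIntegrable (fun y : E => ‖y‖ ^ (-α)) μ :=
    locallyIntegrable_of_norm_le_rpow hd hα (C := 1)
      (Eventually.of_forall fun y => by simp [abs_of_nonneg (Real.rpow_nonneg (norm_nonneg y) _)])
      (measurable_norm.pow_const _).aestronglyMeasurable
  exact ((hloc.integrableOn_isCompact hs.isCompact_closure).mono_set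
    subset_closure).setLIntegral_lt_top

theorem tendsto_addHaar_ball_atTop [Nontrivial E] (a : E) :
    Tendsto (fun R => μ (ball a R)) atTop (𝓝 ∞) := by
  have hpow : Tendsto (fun R : ℝ => ENNReal.ofReal (R ^ finrank ℝ E)) atTop (𝓝 ∞) :=
    ENNReal.tendsto_ofReal_atTop.comp (tendsto_pow_atTop finrank_pos.ne')
  have hlim := ENNReal.Tendsto.mul_const hpow (b := μ (ball 0 1)) (Or.inr measure_ball_lt_top.ne)
  rw [ENNReal.top_mul (measure_ball_pos μ 0 one_pos).ne'] at hlim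
  refine hlim.congr' ?_
  filter_upwards [eventually_ge_atTop 0] with R hR
  exact (μ.addHaar_ball a hR).symm

end AddHaar

section Morrey

variable {d : ℕ} {p q : ℝ}

noncomputable def morreyOnBall (d : ℕ) (p q : ℝ) (f : EuclideanSpace ℝ (Fin d) → ℝ)
    (a : EuclideanSpace ℝ (Fin d)) (R : ℝ) : ℝ≥0∞ :=
  volume (ball a R) ^ (1 / q - 1 / p) *
    (∫⁻ y in ball a R, ENNReal.ofReal (|f y| ^ p)) ^ (1 / p)

theorem morreyOnBall_le_morreyNorm (f : EuclideanSpace ℝ (Fin d) → ℝ)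
    (a : EuclideanSpace ℝ (Fin d)) {R : ℝ} (hR : 0 < R) :
    morreyOnBall d p q f a R ≤ morreyNorm d p q f :=
  le_iSup_of_le a (le_iSup_of_le R (le_iSup_of_le hR le_rfl))

theorem morreyNorm_le {f : EuclideanSpace ℝ (Fin d) → ℝ} {C : ℝ≥0∞}
    (h : ∀ a R, 0 < R → morreyOnBall d p q f a R ≤ C) : morreyNorm d p q f ≤ C :=
  iSup_le fun a => iSup_le fun R => iSup_le fun hR => h a R hR

theorem morreyOnBall_mono (hp : 0 ≤ p) {f g : EuclideanSpace ℝ (Fin d) → ℝ}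
    (hfg : ∀ x, |f x| ≤ |g x|) (a : EuclideanSpace ℝ (Fin d)) (R : ℝ) :
    morreyOnBall d p q f a R ≤ morreyOnBall d p q g a R := by
  refine mul_le_mul_right
    (ENNReal.rpow_le_rpow (lintegral_mono fun y => ?_) (one_div_nonneg.2 hp)) _
  exact ENNReal.ofReal_le_ofReal (Real.rpow_le_rpow (abs_nonneg _) (hfg y) hp)

theorem morreyNorm_mono (hp : 0 ≤ p) {f g : EuclideanSpace ℝ (Fin d) → ℝ}
    (hfg : ∀ x, |f x| ≤ |g x|) : morreyNorm d p q f ≤ morreyNorm d p q g :=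
  morreyNorm_le fun a R hR =>
    (morreyOnBall_mono hp hfg a R).trans (morreyOnBall_le_morreyNorm g a hR)

theorem morreyOnBall_add_le (hp : 1 ≤ p) {f g : EuclideanSpace ℝ (Fin d) → ℝ}
    (hf : AEMeasurable f) (hg : AEMeasurable g) (a : EuclideanSpace ℝ (Fin d)) (R : ℝ) :
    morreyOnBall d p q (f + g) a R ≤ morreyOnBall d p q f a R + morreyOnBall d p q g a R := by
  have hofReal : ∀ t : ℝ, ENNReal.ofReal (|t| ^ p) = ENNReal.ofReal |t| ^ p := fun t =>
    (ENNReal.ofReal_rpow_of_nonneg (abs_nonneg t) (by linarith)).symm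
  unfold morreyOnBall
  rw [← mul_add]
  gcongr
  simp only [hofReal]
  calc (∫⁻ y in ball a R, ENNReal.ofReal |(f + g) y| ^ p) ^ (1 / p)
      ≤ (∫⁻ y in ball a R, (ENNReal.ofReal |f y| + ENNReal.ofReal |g y|) ^ p) ^ (1 / p) := by
        gcongr with y
        rw [← ENNReal.ofReal_add (abs_nonneg _) (abs_nonneg _)]
        exact ENNReal.ofReal_le_ofReal (abs_add_le _ _)
    _ ≤ _ := ENNReal.lintegral_Lp_add_le hf.abs.ennreal_ofReal.restrict
        hg.abs.ennreal_ofReal.restrict hp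

theorem tendsto_morreyOnBall_atTop (hd : 1 ≤ d) (hp : 0 < p) (hpq : p < q)
    {f : EuclideanSpace ℝ (Fin d) → ℝ} (hf : ∫⁻ y, ENNReal.ofReal (|f y| ^ p) ≠ ∞)
    (a : EuclideanSpace ℝ (Fin d)) :
    Tendsto (fun R => morreyOnBall d p q f a R) atTop (𝓝 0) := by
  have : Nontrivial (EuclideanSpace ℝ (Fin d)) :=
    Module.nontrivial_of_finrank_pos (R := ℝ) (by simp; omega)
  have hs : 1 / q - 1 / p < 0 := by
    rw [sub_neg]; exact one_div_lt_one_div_of_lt hp hpq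
  have hvol : Tendsto (fun R => volume (ball a R) ^ (1 / q - 1 / p)) atTop (𝓝 0) := by
    have := ((ENNReal.continuous_rpow_const (y := 1 / q - 1 / p)).tendsto ∞).comp
      (tendsto_addHaar_ball_atTop volume a)
    rwa [ENNReal.top_rpow_of_neg hs] at this
  have hbound := ENNReal.Tendsto.mul_const hvol
    (b := (∫⁻ y, ENNReal.ofReal (|f y| ^ p)) ^ (1 / p)) (Or.inr (by simp [hf, hp.le]))
  rw [zero_mul] at hbound
  refine tendsto_of_tendsto_of_tendsto_of_le_of_le tendsto_const_nhds hbound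
    (fun _ => bot_le) fun R => ?_
  unfold morreyOnBall
  gcongr
  exact Measure.restrict_le_self

theorem le_morreyNorm_of_eventually_le_morreyOnBall_add (hd : 1 ≤ d) (hp : 1 ≤ p) (hpq : p < q)
    {f h : EuclideanSpace ℝ (Fin d) → ℝ} (hf : AEMeasurable f) (hh : AEMeasurable h)
    (hh_fin : ∫⁻ y, ENNReal.ofReal (|h y| ^ p) ≠ ∞) (a : EuclideanSpace ℝ (Fin d)) {C : ℝ≥0∞}
    (hC : ∀ᶠ R in atTop, C ≤ morreyOnBall d p q (f + h) a R) :
    C ≤ morreyNorm d p q f := by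
  have hlim := (tendsto_morreyOnBall_atTop hd (by linarith) hpq hh_fin a).const_add
    (morreyNorm d p q f)
  rw [add_zero] at hlim
  refine ge_of_tendsto hlim ((hC.and (eventually_gt_atTop 0)).mono fun R ⟨hCR, hR⟩ => ?_)
  calc C ≤ morreyOnBall d p q (f + h) a R := hCR
    _ ≤ morreyOnBall d p q f a R + morreyOnBall d p q h a R := morreyOnBall_add_le hp hf hh a R
    _ ≤ morreyNorm d p q f + morreyOnBall d p q h a R := by
        gcongr
        exact morreyOnBall_le_morreyNorm f a hR

end Morrey

section PowerFunction

variable {d : ℕ} {p q : ℝ}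

theorem ofReal_abs_norm_rpow_neg_div_rpow (y : EuclideanSpace ℝ (Fin d)) :
    ENNReal.ofReal (|‖y‖ ^ (-(d : ℝ) / q)| ^ p) = ENNReal.ofReal (‖y‖ ^ (-((d : ℝ) / q * p))) := by
  rw [abs_of_nonneg (Real.rpow_nonneg (norm_nonneg y) _), ← Real.rpow_mul (norm_nonneg y),
    neg_div, neg_mul]

/-- `‖x‖ ^ (-d/q)` is homogeneous of exactly the degree compensated by the normalisation
`|B| ^ (1/q - 1/p)`. -/
theorem morreyOnBall_rpow_neg_norm_zero (hp : 0 < p) {R : ℝ} (hR : 0 < R) :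
    morreyOnBall d p q (fun x => ‖x‖ ^ (-(d : ℝ) / q)) 0 R =
      morreyOnBall d p q (fun x => ‖x‖ ^ (-(d : ℝ) / q)) 0 1 := by
  unfold morreyOnBall
  simp only [ofReal_abs_norm_rpow_neg_div_rpow]
  rw [setLIntegral_ball_zero_rpow_neg volume _ hR, Measure.addHaar_ball_of_pos volume 0 hR,
    finrank_euclideanSpace_fin,
    ENNReal.mul_rpow_of_ne_top ENNReal.ofReal_ne_top measure_ball_lt_top.ne,
    ENNReal.mul_rpow_of_nonneg _ _ (by positivity)]
  have hscale : ENNReal.ofReal (R ^ d) ^ (1 / q - 1 / p) *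
      ENNReal.ofReal (R ^ ((d : ℝ) - d / q * p)) ^ (1 / p) = 1 := by
    rw [ENNReal.ofReal_rpow_of_pos (by positivity), ENNReal.ofReal_rpow_of_pos (by positivity),
      ← ENNReal.ofReal_mul (by positivity), ← Real.rpow_natCast, ← Real.rpow_mul hR.le,
      ← Real.rpow_mul hR.le, ← Real.rpow_add hR]
    convert ENNReal.ofReal_one
    convert Real.rpow_zero R
    field_simp
    ring
  rw [mul_mul_mul_comm, hscale, one_mul]

theorem morreyOnBall_rpow_neg_norm_le_zero (hd : 1 ≤ d) (hp : 0 < p) (hq : 0 < q)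
    (a : EuclideanSpace ℝ (Fin d)) {R : ℝ} (hR : 0 < R) :
    morreyOnBall d p q (fun x => ‖x‖ ^ (-(d : ℝ) / q)) a R ≤
      morreyOnBall d p q (fun x => ‖x‖ ^ (-(d : ℝ) / q)) 0 R := by
  have : Nontrivial (EuclideanSpace ℝ (Fin d)) :=
    Module.nontrivial_of_finrank_pos (R := ℝ) (by simp; omega)
  unfold morreyOnBall
  simp only [ofReal_abs_norm_rpow_neg_div_rpow]
  rw [Measure.addHaar_ball_center]
  exact mul_le_mul_right (ENNReal.rpow_le_rpow
    (setLIntegral_ball_rpow_neg_le_ball_zero volume (by positivity) a hR) (by positivity)) _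

theorem morreyNorm_rpow_neg_norm (hd : 1 ≤ d) (hp : 0 < p) (hq : 0 < q) :
    morreyNorm d p q (fun x => ‖x‖ ^ (-(d : ℝ) / q)) =
      morreyOnBall d p q (fun x => ‖x‖ ^ (-(d : ℝ) / q)) 0 1 :=
  le_antisymm
    (morreyNorm_le fun a _ hR => (morreyOnBall_rpow_neg_norm_le_zero hd hp hq a hR).trans
      (morreyOnBall_rpow_neg_norm_zero hp hR).le)
    (morreyOnBall_le_morreyNorm _ 0 one_pos)

theorem lintegral_indicator_closedBall_rpow_neg_norm_ne_top (hd : 1 ≤ d) (hp : 0 < p)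
    (hpq : p < q) (r : ℝ) :
    ∫⁻ y, ENNReal.ofReal (|(closedBall 0 r).indicator
      (fun x : EuclideanSpace ℝ (Fin d) => ‖x‖ ^ (-(d : ℝ) / q)) y| ^ p) ≠ ∞ := by
  have hα : (d : ℝ) / q * p < finrank ℝ (EuclideanSpace ℝ (Fin d)) := by
    rw [finrank_euclideanSpace_fin, div_mul_eq_mul_div, div_lt_iff₀ (hp.trans hpq)]
    exact mul_lt_mul_of_pos_left hpq (by positivity)
  have hind : (fun y => ENNReal.ofReal (|(closedBall 0 r).indicator
      (fun x : EuclideanSpace ℝ (Fin d) => ‖x‖ ^ (-(d : ℝ) / q)) y| ^ p)) =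
      (closedBall 0 r).indicator fun y => ENNReal.ofReal (‖y‖ ^ (-((d : ℝ) / q * p))) := by
    ext y
    by_cases hy : y ∈ closedBall 0 r <;>
      simp [hy, ofReal_abs_norm_rpow_neg_div_rpow, Real.zero_rpow hp.ne']
  rw [hind, lintegral_indicator measurableSet_closedBall]
  exact (setLIntegral_rpow_neg_norm_lt_top volume (by simp; omega) hα isBounded_closedBall).ne

end PowerFunction

theorem morreyNorm_tail_eq_general (d : ℕ) (p q : ℝ) (hp : 1 ≤ p) (hpq : p < q) (hd : 1 ≤ d)
    (ε : ℝ) :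
    letI f : EuclideanSpace ℝ (Fin d) → ℝ := fun x => ‖x‖ ^ (-(d : ℝ) / q)
    letI w : EuclideanSpace ℝ (Fin d) → ℝ :=
      fun x => if 1 / ε < ‖x‖ then f x else 0
    morreyNorm d p q w = morreyNorm d p q f := by
  set f : EuclideanSpace ℝ (Fin d) → ℝ := fun x => ‖x‖ ^ (-(d : ℝ) / q)
  set w : EuclideanSpace ℝ (Fin d) → ℝ := fun x => if 1 / ε < ‖x‖ then f x else 0
  have hp0 : 0 < p := by linarith
  have hq0 : 0 < q := by linarith
  let h := (closedBall (0 : EuclideanSpace ℝ (Fin d)) (1 / ε)).indicator f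
  have hf_split : f = w + h := by
    ext x
    simp only [Pi.add_apply, w, h, Set.indicator, mem_closedBall_zero_iff]
    split_ifs <;> linarith
  have hf_meas : Measurable f := measurable_norm.pow_const _
  have hw_meas : Measurable w :=
    Measurable.ite (measurableSet_lt measurable_const measurable_norm) hf_meas measurable_const
  have hw_le : morreyNorm d p q w ≤ morreyNorm d p q f :=
    morreyNorm_mono hp0.le fun x => by dsimp only [w]; split_ifs <;> simp
  have hf_le : morreyNorm d p q f ≤ morreyNorm d p q w :=
    (morreyNorm_rpow_neg_norm hd hp0 hq0).trans_le
      (le_morreyNorm_of_eventually_le_morreyOnBall_add hd hp hpq hw_meas.aemeasurable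
        (hf_meas.indicator measurableSet_closedBall).aemeasurable
        (lintegral_indicator_closedBall_rpow_neg_norm_ne_top hd hp0 hpq (1 / ε)) 0
        ((eventually_gt_atTop 0).mono fun R hR =>
          hf_split ▸ (morreyOnBall_rpow_neg_norm_zero hp0 hR).ge))
  exact le_antisymm hw_le hf_le

/-- with `f(x) = |x|^{-d/q}` and `w = χ_{(1/ε,∞)}(|·|) f`, the Morrey
norms satisfy `‖w‖_{M^p_q} = ‖f‖_{M^p_q}`. -/
theorem morreyNorm_tail_eq (d : ℕ) (p q : ℝ) (hp : 1 ≤ p) (hpq : p < q) (hd : 1 ≤ d)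
    (ε : ℝ) (hε0 : 0 < ε) (hε1 : ε < 1) :
    letI f : EuclideanSpace ℝ (Fin d) → ℝ := fun x => ‖x‖ ^ (-(d : ℝ) / q)
    letI w : EuclideanSpace ℝ (Fin d) → ℝ :=
      fun x => if 1 / ε < ‖x‖ then f x else 0
    morreyNorm d p q w = morreyNorm d p q f :=
  morreyNorm_tail_eq_general d p q hp hpq hd ε
end
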